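/- Let d > a > 0 be integers and let f : {0,1}^{ℤ^d} → {0,1} be the transition function f(x) = min over (b_1,…,b_a) ∈ {0,1}^a of max over (b_{a+1},…,b_d) ∈ {0,1}^{d−a} of x(b_1,…,b_d), where (b_1,…,b_d) denotes the lattice point of ℤ^d with these coordinates. Then for every ε ∈ (0,1] there is a constant c > 0 such that every probability measure μ invariant for N_ε D_f satisfies μ(1_{S_{0,L}}) ≥ exp(−c·(L^a + 1)) for every integer L ≥ 0 (i.e., −ln μ(1_{S_{0,L}}) is bounded by a constant times L^a). -/

import Mathlib

open MeasureTheory ENNReal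

namespace CAPaper

/-- Sites of the lattice `ℤ^d`. -/
abbrev Site (d : ℕ) := Fin d → ℤ

/-- Configurations `{0,1}^{ℤ^d}`, values in `Bool` (`false` = 0, `true` = 1). -/
abbrev Config (d : ℕ) := Site d → Bool

/-- Euclidean norm on `ℝ^d`. -/
noncomputable def enorm {d : ℕ} (v : Fin d → ℝ) : ℝ := Real.sqrt (∑ k, v k ^ 2)

/-- Euclidean scalar product on `ℝ^d`. -/
noncomputable def edot {d : ℕ} (u v : Fin d → ℝ) : ℝ := ∑ k, u k * v k

/-- The embedding `ℤ^d → ℝ^d`. -/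
def embed {d : ℕ} (i : Site d) : Fin d → ℝ := fun k => (i k : ℝ)

/-- Euclidean norm of a lattice point. -/
noncomputable def enormZ {d : ℕ} (i : Site d) : ℝ := enorm (embed i)

open Classical in
/-- `Conf S` is the configuration whose indicator is `S`. -/
noncomputable def Conf {d : ℕ} (S : Set (Site d)) : Config d :=
  fun i => if i ∈ S then true else false

/-- `f` is local with support `Δ`. -/
def IsLocal {d : ℕ} (f : Config d → Bool) (Δ : Finset (Site d)) : Prop :=
  ∀ x y : Config d, (∀ i ∈ Δ, x i = y i) → f x = f y

/-- `f` is monotonic. -/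
def Monotonic {d : ℕ} (f : Config d → Bool) : Prop :=
  ∀ x y : Config d, (∀ i, x i ≤ y i) → f x ≤ f y

/-- `f` is a standard transition function with support `Δ`. -/
def Standard {d : ℕ} (f : Config d → Bool) (Δ : Finset (Site d)) : Prop :=
  IsLocal f Δ ∧ Monotonic f ∧ ∃ x y : Config d, f x ≠ f y

/-- The deterministic cellular automaton `D_f`. -/
def Df {d : ℕ} (f : Config d → Bool) (x : Config d) : Config d :=
  fun i => f (fun j => x (i + j))

/-- The invariant configuration `x` attracts `D`. -/
def Attracts {d : ℕ} (D : Config d → Config d) (x : Config d) : Prop :=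
  D x = x ∧ ∀ y : Config d, {i | y i ≠ x i}.Finite → ∃ t : ℕ, D^[t] y = x

/-- `D_f` has velocity `V` in the direction `p`. -/
def HasVelocity {d : ℕ} (f : Config d → Bool) (p : Fin d → ℝ) (V : ℝ) : Prop :=
  ∀ C : ℝ, Df f (Conf {i | edot (embed i) p ≤ C}) = Conf {i | edot (embed i) p ≤ C + V}

/-- Probability that, after the one-sided noise with parameter `ε` is applied to a
configuration whose value at a given site is `xi`, that site carries the value `b`. -/
noncomputable def noiseProb (ε : ℝ) (xi b : Bool) : ℝ≥0∞ :=
  if xi then (if b then 1 else 0)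
  else (if b then ENNReal.ofReal ε else ENNReal.ofReal (1 - ε))

/-- `ν` is the result of one step of the stochastic automaton `N_ε D` applied to `μ`
(first apply `D`, then independent one-sided noise at every site); since the noise measure
is a product measure, this is equivalent to specifying all cylinder probabilities of `ν`. -/
def IsStep {ι : Type*} (ε : ℝ) (D : (ι → Bool) → (ι → Bool)) (μ ν : Measure (ι → Bool)) : Prop :=
  ∀ (Λ : Finset ι) (b : ι → Bool),
    ν {y | ∀ i ∈ Λ, y i = b i} = ∫⁻ x, ∏ i ∈ Λ, noiseProb ε (D x i) (b i) ∂μ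

/-- `μ` is invariant for the stochastic automaton `N_ε D`. -/
def Invariant {ι : Type*} (ε : ℝ) (D : (ι → Bool) → (ι → Bool)) (μ : Measure (ι → Bool)) : Prop :=
  IsStep ε D μ μ

/-- The cylinder event: all sites of `Λ` carry the value 1. -/
def ones {ι : Type*} (Λ : Set ι) : Set (ι → Bool) := {x | ∀ i ∈ Λ, x i = true}


/-- The lattice point of `ℤ^d` whose first `a` coordinates are given by the Boolean
vector `u` and whose last `d − a` coordinates are given by `v`. -/
def bpoint (d a : ℕ) (u : Fin a → Bool) (v : Fin (d - a) → Bool) : Site d :=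
  fun k => if h : (k : ℕ) < a then (if u ⟨k, h⟩ then 1 else 0)
    else (if v ⟨(k : ℕ) - a, by have := k.isLt; omega⟩ then 1 else 0)

/-- The transition function `f(x) = min_{b₁,…,b_a ∈ {0,1}} max_{b_{a+1},…,b_d ∈ {0,1}}
x(b₁,…,b_d)` of Note 2 of the paper. -/
noncomputable def fMinMax (d a : ℕ) : Config d → Bool := fun x =>
  (Finset.univ : Finset (Fin a → Bool)).inf fun u =>
    (Finset.univ : Finset (Fin (d - a) → Bool)).sup fun v => x (bpoint d a u v)

/-!
One step of `D_f` maps a box of ones onto a box that is one shorter in each of the first `a`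
directions and one longer in each of the others. Since the noise only turns zeros into ones,
invariance gives `μ(1_Λ) ≤ μ(1_Λ')` whenever `D_f` maps `1_Λ` into `1_Λ'`. Starting from a slab
of `(4L + 1)^a` sites, which the noise alone fills with probability at least `ε^((4L + 1)^a)`,
`2L` such steps reach a cube containing `S_{0,L}`.
-/

section NoisyAutomaton

variable {ι : Type*} {ε : ℝ} {D : (ι → Bool) → (ι → Bool)} {μ : Measure (ι → Bool)}

lemma measurableSet_ones (Λ : Finset ι) : MeasurableSet (ones (Λ : Set ι)) := by
  have : ones (Λ : Set ι) = ⋂ i ∈ Λ, (fun x : ι → Bool => x i) ⁻¹' {true} := by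
    ext x; simp [ones]
  rw [this]
  exact Finset.measurableSet_biInter Λ fun i _ => measurable_pi_apply i (measurableSet_singleton _)

lemma ones_anti {Λ Λ' : Set ι} (h : Λ ⊆ Λ') : ones Λ' ⊆ ones Λ :=
  fun _ hx i hi => hx i (h hi)

lemma Invariant.measure_ones (hμ : Invariant ε D μ) (Λ : Finset ι) :
    μ (ones (Λ : Set ι)) = ∫⁻ x, ∏ i ∈ Λ, noiseProb ε (D x i) true ∂μ :=
  hμ Λ fun _ => true

lemma ofReal_le_noiseProb_true (hε1 : ε ≤ 1) (b : Bool) :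
    ENNReal.ofReal ε ≤ noiseProb ε b true := by
  cases b <;> simp [noiseProb, hε1]

lemma Invariant.ofReal_pow_card_le_measure_ones [IsProbabilityMeasure μ] (hμ : Invariant ε D μ)
    (hε1 : ε ≤ 1) (Λ : Finset ι) :
    ENNReal.ofReal ε ^ Λ.card ≤ μ (ones (Λ : Set ι)) := by
  rw [hμ.measure_ones]
  calc ENNReal.ofReal ε ^ Λ.card = ∫⁻ _, ENNReal.ofReal ε ^ Λ.card ∂μ := by simp
    _ ≤ _ := lintegral_mono fun x =>
      Finset.pow_card_le_prod _ _ _ fun i _ => ofReal_le_noiseProb_true hε1 _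

lemma Invariant.measure_ones_le_of_mapsTo {Λ Λ' : Finset ι} (hμ : Invariant ε D μ)
    (h : Set.MapsTo D (ones (Λ : Set ι)) (ones (Λ' : Set ι))) :
    μ (ones (Λ : Set ι)) ≤ μ (ones (Λ' : Set ι)) := by
  rw [hμ.measure_ones Λ', ← lintegral_indicator_one (measurableSet_ones Λ)]
  refine lintegral_mono fun x => ?_
  by_cases hx : x ∈ ones (Λ : Set ι)
  · rw [Set.indicator_of_mem hx, Finset.prod_eq_one fun j hj => by simp [h hx j hj, noiseProb]]
    rfl
  · simp [Set.indicator_of_notMem hx]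

end NoisyAutomaton

section MinMax

variable {d a : ℕ}

lemma fMinMax_eq_true {x : Config d} :
    fMinMax d a x = true ↔ ∀ u, ∃ v, x (bpoint d a u v) = true := by
  refine (Finset.inf_eq_top_iff _ _).trans ?_
  simp only [Finset.mem_univ, forall_const]
  exact forall_congr' fun u => Finset.sup_eq_top_iff.trans (by simp)

lemma bpoint_apply_of_lt (u : Fin a → Bool) (v : Fin (d - a) → Bool) {k : Fin d}
    (hk : (k : ℕ) < a) :
    bpoint d a u v k = if u ⟨k, hk⟩ then 1 else 0 :=
  dif_pos hk

lemma bpoint_apply_of_le (u : Fin a → Bool) (v : Fin (d - a) → Bool) {k : Fin d}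
    (hk : a ≤ (k : ℕ)) :
    bpoint d a u v k = if v ⟨k - a, by omega⟩ then 1 else 0 :=
  dif_neg (not_lt.mpr hk)

/-- Whatever the first `a` bits `u` are, the last bits `v` can be chosen to step back into
the box. -/
lemma Df_fMinMax_eq_true_of_box {m M : Site d} (hmM : ∀ k : Fin d, a ≤ (k : ℕ) → m k ≤ M k)
    {x : Config d} (hx : ∀ i ∈ Finset.Icc m M, x i = true) {j : Site d}
    (hj : ∀ k : Fin d,
      if (k : ℕ) < a then m k ≤ j k ∧ j k < M k else m k ≤ j k + 1 ∧ j k ≤ M k) :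
    Df (fMinMax d a) x j = true := by
  refine fMinMax_eq_true.2 fun u =>
    ⟨fun q => decide (j ⟨a + q, by omega⟩ < m ⟨a + q, by omega⟩), ?_⟩
  suffices h : ∀ k, m k ≤ j k + bpoint d a u _ k ∧ j k + bpoint d a u _ k ≤ M k from
    hx _ (Finset.mem_Icc.2 ⟨fun k => (h k).1, fun k => (h k).2⟩)
  intro k
  have hjk := hj k
  rcases lt_or_ge (k : ℕ) a with hk | hk
  · rw [if_pos hk] at hjk
    rw [bpoint_apply_of_lt _ _ hk]
    split_ifs <;> omega
  · rw [if_neg (not_lt.2 hk)] at hjk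
    have hka : (⟨a + (k - a), by omega⟩ : Fin d) = k := Fin.ext (by simp only; omega)
    rw [bpoint_apply_of_le _ _ hk]
    simp only [hka, decide_eq_true_eq]
    have := hmM k hk
    split_ifs <;> omega

end MinMax

section Boxes

variable {d : ℕ}

lemma abs_le_enormZ (i : Site d) (k : Fin d) : |(i k : ℝ)| ≤ enormZ i :=
  Real.abs_le_sqrt <| Finset.single_le_sum (f := fun k => (i k : ℝ) ^ 2)
    (fun _ _ => sq_nonneg _) (Finset.mem_univ k)

/-- The box of ones after `s` steps: at `s = 0` a slab of side `4L + 1` in the first `a`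
directions and of width one in the others, at `s = 2L` the cube `[-L, L]^d`. -/
noncomputable def stageBox (d a L s : ℕ) : Finset (Site d) :=
  Finset.Icc (fun k => if (k : ℕ) < a then -(L : ℤ) else L - s)
    (fun k => if (k : ℕ) < a then 3 * L - s else L)

lemma Invariant.monotone_measure_ones_stageBox {a : ℕ} {ε : ℝ} {μ : Measure (Config d)}
    (hμ : Invariant ε (Df (fMinMax d a)) μ) (L : ℕ) :
    Monotone fun s => μ (ones (stageBox d a L s : Set (Site d))) := by
  refine monotone_nat_of_le_succ fun s => hμ.measure_ones_le_of_mapsTo fun x hx j hj => ?_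
  refine Df_fMinMax_eq_true_of_box (fun k hk => ?_) (fun i hi => hx i hi) fun k => ?_
  · simp only [if_neg (not_lt.2 hk)]
    omega
  · simp only [stageBox, Finset.mem_coe, Finset.mem_Icc] at hj
    have hlo := hj.1 k
    have hhi := hj.2 k
    split_ifs at hlo hhi ⊢ <;> push_cast at hlo hhi ⊢ <;> omega

lemma ball_subset_stageBox (a L : ℕ) :
    {i : Site d | enormZ i ≤ L} ⊆ (stageBox d a L (2 * L) : Set (Site d)) := by
  intro i hi
  have hik : ∀ k, -(L : ℤ) ≤ i k ∧ i k ≤ L := fun k => by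
    have := abs_le.1 ((abs_le_enormZ i k).trans hi)
    exact ⟨by exact_mod_cast this.1, by exact_mod_cast this.2⟩
  simp only [stageBox, Finset.coe_Icc, Set.mem_Icc]
  refine ⟨fun k => ?_, fun k => ?_⟩ <;> have := hik k <;> dsimp only <;> split_ifs <;>
    push_cast <;> omega

lemma card_stageBox_zero_le (a L : ℕ) : (stageBox d a L 0).card ≤ 5 ^ a * (L ^ a + 1) := by
  calc (stageBox d a L 0).card = ∏ k : Fin d, if (k : ℕ) < a then 4 * L + 1 else 1 := by
        simp only [stageBox, Pi.card_Icc, Int.card_Icc]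
        exact Finset.prod_congr rfl fun k _ => by split_ifs <;> omega
    _ = (4 * L + 1) ^ min d a := by
        rw [Finset.prod_ite, Finset.prod_const, Finset.prod_const_one, mul_one,
          Fin.card_filter_val_lt]
    _ ≤ (4 * L + 1) ^ a := Nat.pow_le_pow_right (by omega) (min_le_right _ _)
    _ ≤ 5 ^ a * (L ^ a + 1) := by
        rcases Nat.eq_zero_or_pos L with rfl | hL
        · simp [Nat.one_le_iff_ne_zero]
        · calc (4 * L + 1) ^ a ≤ (5 * L) ^ a := Nat.pow_le_pow_left (by omega) a
            _ ≤ 5 ^ a * (L ^ a + 1) := by rw [mul_pow]; exact Nat.mul_le_mul_left _ (by omega)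

end Boxes

lemma exp_mul_log_le_pow {ε C : ℝ} (hε : 0 < ε) (hε1 : ε ≤ 1) {n : ℕ} (hn : (n : ℝ) ≤ C) :
    Real.exp (C * Real.log ε) ≤ ε ^ n :=
  calc Real.exp (C * Real.log ε) ≤ Real.exp (n * Real.log ε) :=
        Real.exp_le_exp.2 (mul_le_mul_of_nonpos_right hn (Real.log_nonpos hε.le hε1))
    _ = ε ^ n := by rw [Real.exp_nat_mul, Real.exp_log hε]

theorem stmt19_general (d a : ℕ)
    (ε : ℝ) (hε : 0 < ε) (hε1 : ε ≤ 1) :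
    ∃ c : ℝ, 0 < c ∧
      ∀ μ : Measure (Config d), IsProbabilityMeasure μ →
        Invariant ε (Df (fMinMax d a)) μ →
        ∀ L : ℕ,
          ENNReal.ofReal (Real.exp (-(c * ((L : ℝ) ^ a + 1)))) ≤
            μ (ones {i : Site d | enormZ i ≤ (L : ℝ)}) := by
  have hlog : Real.log ε ≤ 0 := Real.log_nonpos hε.le hε1
  refine ⟨5 ^ a * (1 - Real.log ε), mul_pos (by positivity) (by linarith), fun μ _ hμ L => ?_⟩
  have hcard : ((stageBox d a L 0).card : ℝ) ≤ 5 ^ a * ((L : ℝ) ^ a + 1) := by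
    exact_mod_cast card_stageBox_zero_le a L
  have hexp : -(5 ^ a * (1 - Real.log ε) * ((L : ℝ) ^ a + 1)) ≤
      5 ^ a * ((L : ℝ) ^ a + 1) * Real.log ε := by
    nlinarith [show (0 : ℝ) ≤ 5 ^ a * ((L : ℝ) ^ a + 1) by positivity]
  calc ENNReal.ofReal (Real.exp (-(5 ^ a * (1 - Real.log ε) * ((L : ℝ) ^ a + 1))))
      ≤ ENNReal.ofReal (ε ^ (stageBox d a L 0).card) := ENNReal.ofReal_le_ofReal <|
        (Real.exp_le_exp.2 hexp).trans (exp_mul_log_le_pow hε hε1 hcard)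
    _ = ENNReal.ofReal ε ^ (stageBox d a L 0).card := ENNReal.ofReal_pow hε.le _
    _ ≤ μ (ones (stageBox d a L 0 : Set (Site d))) := hμ.ofReal_pow_card_le_measure_ones hε1 _
    _ ≤ μ (ones (stageBox d a L (2 * L) : Set (Site d))) :=
        hμ.monotone_measure_ones_stageBox L (Nat.zero_le _)
    _ ≤ μ (ones {i : Site d | enormZ i ≤ (L : ℝ)}) :=
        measure_mono (ones_anti (ball_subset_stageBox a L))

/-- Note 2 of the paper: for the min-max automaton, every invariant
probability measure of `N_ε D_f` satisfies `−ln μ(1_{S_{0,L}}) ≺ L^a`. -/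
theorem stmt19 (d a : ℕ) (ha : 0 < a) (had : a < d)
    (ε : ℝ) (hε : 0 < ε) (hε1 : ε ≤ 1) :
    ∃ c : ℝ, 0 < c ∧
      ∀ μ : Measure (Config d), IsProbabilityMeasure μ →
        Invariant ε (Df (fMinMax d a)) μ →
        ∀ L : ℕ,
          ENNReal.ofReal (Real.exp (-(c * ((L : ℝ) ^ a + 1)))) ≤
            μ (ones {i : Site d | enormZ i ≤ (L : ℝ)}) :=
  stmt19_general d a ε hε hε1

end CAPaper
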